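/- arXiv:1902.02329 — 3 statements merged into one kernel-verified Lean document; each statement's English description precedes it below -/
import Mathlib

section
/- Let p < 0. For any measure space (X, 𝒜, μ) and any measurable f, g : X → (0,∞] (with the convention f^p = 0 where f = ∞) such that ∫ f^p dμ < ∞, ∫ g^p dμ < ∞ and ∫ f^p dμ + ∫ g^p dμ > 0, setting Γ := 2·∫ (fg)^{p/2} dμ / (∫ f^p dμ + ∫ g^p dμ), one has ∫ (f+g)^p dμ ≥ ( ((1+√(1−Γ²))/2)^{1/p} + ((1−√(1−Γ²))/2)^{1/p} )^p · (∫ f^p dμ + ∫ g^p dμ). -/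
open MeasureTheory Real Set
open scoped ENNReal

/-! For `P, Q > 0` put `u = (log P - log Q) / 2`. Then
`(P + Q) ^ p = (2 cosh u) ^ p (P Q) ^ (p/2)` and `P ^ p + Q ^ p = 2 cosh (p u) (P Q) ^ (p/2)`,
and for `p < 0` the first ratio is a convex function of the second, `y = 2 cosh (p u) ≥ 2`.
A supporting line at `y₀ = 2 / Γ` gives the pointwise bound
`(P + Q) ^ p + E (P ^ p + Q ^ p) ≥ T (P Q) ^ (p/2)` with `E ≥ 0`. (For `Γ = 1` the point
`y₀ = 2` is an endpoint; the bound `powCoshSlope p u ≤ 2 ^ p / 2 / -p` provides a slope.)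
Integrating, the `E`-terms cancel because `∫ (f g) ^ (p/2) = (Γ / 2) (∫ f ^ p + ∫ g ^ p)`,
and what is left is the claimed bound. -/

theorem Real.sinh_le_mul_cosh {x : ℝ} (hx : 0 ≤ x) : sinh x ≤ x * cosh x := by
  have hmono : MonotoneOn (fun y => y * cosh y - sinh y) (Ici 0) := by
    refine monotoneOn_of_deriv_nonneg (convex_Ici 0) (by fun_prop) (by fun_prop) fun y hy => ?_
    rw [interior_Ici, mem_Ioi] at hy
    have hd : HasDerivAt (fun y => y * cosh y - sinh y) (1 * cosh y + y * sinh y - cosh y) y :=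
      ((hasDerivAt_id y).mul (hasDerivAt_cosh y)).sub (hasDerivAt_sinh y)
    rw [hd.deriv]
    nlinarith [sinh_pos_iff.2 hy]
  simpa using hmono self_mem_Ici (mem_Ici.2 hx) hx

theorem Real.add_eq_two_cosh_mul_sqrt {P Q : ℝ} (hP : 0 < P) (hQ : 0 < Q) :
    P + Q = 2 * cosh ((log P - log Q) / 2) * √(P * Q) := by
  rw [cosh_eq, sqrt_eq_rpow, ← exp_log (mul_pos hP hQ), log_mul hP.ne' hQ.ne', ← exp_mul]
  have hsum : exp ((log P - log Q) / 2) * exp ((log P + log Q) * (1 / 2)) = P := by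
    rw [← exp_add]; convert exp_log hP using 2; ring
  have hdiff : exp (-((log P - log Q) / 2)) * exp ((log P + log Q) * (1 / 2)) = Q := by
    rw [← exp_add]; convert exp_log hQ using 2; ring
  linear_combination -hsum - hdiff

noncomputable def powCosh (p u : ℝ) : ℝ := (2 * cosh u) ^ p

theorem powCosh_pos (p u : ℝ) : 0 < powCosh p u := by
  unfold powCosh; positivity

/-- `-d (powCosh p u) / d (2 cosh (p u))`; it is antitone on `u > 0`, which is the convexity. -/
noncomputable def powCoshSlope (p u : ℝ) : ℝ := sinh u * (2 * cosh u) ^ (p - 1) / sinh (-p * u)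

theorem rpow_add_eq_powCosh_mul {p P Q : ℝ} (hP : 0 < P) (hQ : 0 < Q) :
    (P + Q) ^ p = powCosh p ((log P - log Q) / 2) * (P * Q) ^ (p / 2) := by
  rw [add_eq_two_cosh_mul_sqrt hP hQ, mul_rpow (by positivity) (sqrt_nonneg _), sqrt_eq_rpow,
    ← rpow_mul (mul_pos hP hQ).le, powCosh]
  ring_nf

theorem rpow_add_rpow_eq_two_cosh_mul {p P Q : ℝ} (hP : 0 < P) (hQ : 0 < Q) :
    P ^ p + Q ^ p = 2 * cosh (p * ((log P - log Q) / 2)) * (P * Q) ^ (p / 2) := by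
  rw [add_eq_two_cosh_mul_sqrt (rpow_pos_of_pos hP p) (rpow_pos_of_pos hQ p),
    log_rpow hP, log_rpow hQ, ← mul_rpow hP.le hQ.le, sqrt_eq_rpow,
    ← rpow_mul (mul_pos hP hQ).le]
  ring_nf

theorem hasDerivAt_two_cosh_rpow (p u : ℝ) :
    HasDerivAt (fun u => (2 * cosh u) ^ p) (2 * sinh u * p * (2 * cosh u) ^ (p - 1)) u :=
  ((hasDerivAt_cosh u).const_mul 2).rpow_const (Or.inl (by positivity))

theorem hasDerivAt_powCosh_add_mul_cosh {p : ℝ} (hp : p ≠ 0) (E u : ℝ) :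
    HasDerivAt (fun u => powCosh p u + E * (2 * cosh (p * u)))
      (-2 * p * sinh (-p * u) * (E - powCoshSlope p u)) u := by
  have hcosh : HasDerivAt (fun u => cosh (p * u)) (sinh (p * u) * p) u :=
    (hasDerivAt_cosh _).comp u ((hasDerivAt_id u).const_mul p |>.congr_deriv (mul_one p))
  refine ((hasDerivAt_two_cosh_rpow p u).add ((hcosh.const_mul 2).const_mul E)).congr_deriv ?_
  rcases eq_or_ne u 0 with rfl | hu
  · simp
  have hs : sinh (p * u) ≠ 0 := sinh_ne_zero.2 (mul_ne_zero hp hu)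
  rw [powCoshSlope]
  simp only [neg_mul, sinh_neg]
  field_simp
  ring

theorem sinh_le_mul_sinh_sq_add {q u : ℝ} (hq : 0 < q) (hu : 0 ≤ u) :
    sinh (q * u) ≤ q * (sinh u ^ 2 * sinh (q * u) + sinh u * cosh u * cosh (q * u)) := by
  have hqu : 0 ≤ q * u := mul_nonneg hq.le hu
  have h1 : sinh (q * u) ≤ q * u * cosh (q * u) := sinh_le_mul_cosh hqu
  have h2 : u ≤ sinh u * cosh u := by
    nlinarith [self_le_sinh_iff.2 hu, one_le_cosh u, sinh_nonneg_iff.2 hu]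
  have h3 : 0 ≤ sinh u ^ 2 * sinh (q * u) := by
    have := sinh_nonneg_iff.2 hqu; positivity
  have h4 : q * u * cosh (q * u) ≤ q * (sinh u * cosh u) * cosh (q * u) := by
    gcongr
  nlinarith

theorem powCoshSlope_antitoneOn {p : ℝ} (hp : p < 0) : AntitoneOn (powCoshSlope p) (Ioi 0) := by
  have hderiv : ∀ u : ℝ, 0 < u → HasDerivAt (powCoshSlope p)
      (((cosh u * (2 * cosh u) ^ (p - 1) +
            sinh u * (2 * sinh u * (p - 1) * (2 * cosh u) ^ (p - 1 - 1))) * sinh (-p * u) -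
          sinh u * (2 * cosh u) ^ (p - 1) * (cosh (-p * u) * -p)) / sinh (-p * u) ^ 2) u := by
    intro u hu
    have hlin : HasDerivAt (fun u => -p * u) (-p) u :=
      (hasDerivAt_id u).const_mul (-p) |>.congr_deriv (mul_one _)
    exact ((hasDerivAt_sinh u).mul (hasDerivAt_two_cosh_rpow (p - 1) u)).div
      ((hasDerivAt_sinh _).comp u hlin)
      (sinh_ne_zero.2 (mul_pos (neg_pos.2 hp) hu).ne')
  refine antitoneOn_of_deriv_nonpos (convex_Ioi 0)
    (fun u hu => (hderiv u hu).continuousAt.continuousWithinAt)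
    (fun u hu => (hderiv u (by simpa using hu)).differentiableAt.differentiableWithinAt)
    fun u hu => ?_
  rw [interior_Ioi, mem_Ioi] at hu
  rw [(hderiv u hu).deriv]
  refine div_nonpos_of_nonpos_of_nonneg ?_ (sq_nonneg _)
  set q := -p with hq
  have hq0 : 0 < q := neg_pos.2 hp
  have hR : 0 < (2 * cosh u) ^ (p - 1 - 1) := by positivity
  have hpow : (2 * cosh u) ^ (p - 1) = (2 * cosh u) ^ (p - 1 - 1) * (2 * cosh u) := by
    rw [← rpow_add_one (by positivity)]; ring_nf
  have hkey := sinh_le_mul_sinh_sq_add hq0 hu.le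
  have hcosh := cosh_sq u
  set R := (2 * cosh u) ^ (p - 1 - 1)
  rw [hpow]
  have hfact : (cosh u * (R * (2 * cosh u)) + sinh u * (2 * sinh u * (p - 1) * R)) * sinh (q * u)
      - sinh u * (R * (2 * cosh u)) * (cosh (q * u) * q)
      = 2 * R * (sinh (q * u) -
          q * (sinh u ^ 2 * sinh (q * u) + sinh u * cosh u * cosh (q * u))) := by
    rw [show p = -q by rw [hq, neg_neg]]
    linear_combination (2 * R * sinh (q * u)) * hcosh
  rw [hfact]
  exact mul_nonpos_of_nonneg_of_nonpos (by positivity) (by linarith)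

theorem powCoshSlope_le {p u : ℝ} (hp : p < 0) (hu : 0 < u) :
    powCoshSlope p u ≤ 2 ^ p / 2 / -p := by
  have hq : 0 < -p := neg_pos.2 hp
  have hc : 0 < 2 * cosh u := by positivity
  have hsinh : -p * u ≤ sinh (-p * u) := self_le_sinh_iff.2 (by positivity)
  have hpow : (2 * cosh u) ^ p ≤ 2 ^ p :=
    rpow_le_rpow_of_nonpos two_pos (by linarith [one_le_cosh u]) hp.le
  rw [powCoshSlope, rpow_sub_one hc.ne', div_le_div_iff₀ (by positivity) hq]
  calc sinh u * ((2 * cosh u) ^ p / (2 * cosh u)) * -p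
      ≤ u * cosh u * (2 ^ p / (2 * cosh u)) * -p := by
        gcongr
        exact sinh_le_mul_cosh hu.le
    _ = 2 ^ p / 2 * (-p * u) := by field_simp
    _ ≤ 2 ^ p / 2 * sinh (-p * u) := by gcongr

theorem powCosh_add_mul_cosh_le {p u₀ E : ℝ} (hp : p < 0) (hu₀ : 0 ≤ u₀)
    (h_above : ∀ u, u₀ < u → powCoshSlope p u ≤ E)
    (h_below : ∀ u, 0 < u → u < u₀ → E ≤ powCoshSlope p u) (u : ℝ) :
    powCosh p u₀ + E * (2 * cosh (p * u₀)) ≤ powCosh p u + E * (2 * cosh (p * u)) := by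
  wlog hu : 0 ≤ u generalizing u
  · simpa [powCosh, mul_neg] using this (-u) (by linarith)
  set Θ := fun u => powCosh p u + E * (2 * cosh (p * u))
  have hΘ := hasDerivAt_powCosh_add_mul_cosh hp.ne E
  have hcont : ContinuousOn Θ univ := fun u _ => (hΘ u).continuousAt.continuousWithinAt
  have hdiff : ∀ s, DifferentiableOn ℝ Θ s := fun s u _ =>
    (hΘ u).differentiableAt.differentiableWithinAt
  have hsinh : ∀ τ, 0 < τ → 0 < -2 * p * sinh (-p * τ) := fun τ hτ => by
    have : 0 < sinh (-p * τ) := sinh_pos_iff.2 (mul_pos (neg_pos.2 hp) hτ)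
    nlinarith
  rcases le_total u₀ u with hle | hle
  · refine monotoneOn_of_deriv_nonneg (convex_Icc u₀ u) (hcont.mono (subset_univ _)) (hdiff _)
      (fun τ hτ => ?_) (left_mem_Icc.2 hle) (right_mem_Icc.2 hle) hle
    rw [interior_Icc] at hτ
    rw [(hΘ τ).deriv]
    exact mul_nonneg (hsinh τ (hu₀.trans_lt hτ.1)).le (sub_nonneg.2 (h_above τ hτ.1))
  · refine antitoneOn_of_deriv_nonpos (convex_Icc u u₀) (hcont.mono (subset_univ _)) (hdiff _)
      (fun τ hτ => ?_) (left_mem_Icc.2 hle) (right_mem_Icc.2 hle) hle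
    rw [interior_Icc] at hτ
    rw [(hΘ τ).deriv]
    have hτ0 := hu.trans_lt hτ.1
    exact mul_nonpos_of_nonneg_of_nonpos (hsinh τ hτ0).le (sub_nonpos.2 (h_below τ hτ0 hτ.2))

theorem exists_supporting_slope {p u₀ : ℝ} (hp : p < 0) (hu₀ : 0 ≤ u₀) :
    ∃ E, 0 ≤ E ∧ ∀ u,
      powCosh p u₀ + E * (2 * cosh (p * u₀)) ≤ powCosh p u + E * (2 * cosh (p * u)) := by
  rcases hu₀.eq_or_lt with rfl | hu₀
  · refine ⟨2 ^ p / 2 / -p, by have := neg_pos.2 hp; positivity, ?_⟩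
    exact powCosh_add_mul_cosh_le hp le_rfl (fun u hu => powCoshSlope_le hp hu)
      fun u hu hu' => absurd hu' hu.not_gt
  · refine ⟨powCoshSlope p u₀, ?_, powCosh_add_mul_cosh_le hp hu₀.le
      (fun u hu => powCoshSlope_antitoneOn hp hu₀ (hu₀.trans hu) hu.le)
      fun u hu hu' => powCoshSlope_antitoneOn hp hu hu₀ hu'.le⟩
    have := sinh_pos_iff.2 hu₀
    have := sinh_pos_iff.2 (mul_pos (neg_pos.2 hp) hu₀)
    rw [powCoshSlope]
    positivity

theorem two_mul_rpow_half_le_rpow_add_rpow {p P Q : ℝ} (hP : 0 < P) (hQ : 0 < Q) :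
    2 * (P * Q) ^ (p / 2) ≤ P ^ p + Q ^ p := by
  rw [rpow_add_rpow_eq_two_cosh_mul hP hQ]
  have := one_le_cosh (p * ((log P - log Q) / 2))
  have := rpow_pos_of_pos (mul_pos hP hQ) (p / 2)
  nlinarith

theorem mul_rpow_half_le_of_forall_le {p T E P Q : ℝ}
    (h : ∀ u, T ≤ powCosh p u + E * (2 * cosh (p * u))) (hP : 0 < P) (hQ : 0 < Q) :
    T * (P * Q) ^ (p / 2) ≤ (P + Q) ^ p + E * (P ^ p + Q ^ p) := by
  rw [rpow_add_eq_powCosh_mul hP hQ, rpow_add_rpow_eq_two_cosh_mul hP hQ]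
  have := mul_le_mul_of_nonneg_right (h ((log P - log Q) / 2))
    (rpow_pos_of_pos (mul_pos hP hQ) (p / 2)).le
  linarith

theorem ENNReal.ofReal_mul_rpow_half_le {p T D E : ℝ} (hp : p < 0) (hT : 0 ≤ T) (hD : 0 ≤ D)
    (hE : 0 ≤ E)
    (h : ∀ P Q : ℝ, 0 < P → 0 < Q →
      T * (P * Q) ^ (p / 2) ≤ D * (P + Q) ^ p + E * (P ^ p + Q ^ p))
    {a b : ℝ≥0∞} (ha : a ≠ 0) (hb : b ≠ 0) :
    ENNReal.ofReal T * (a * b) ^ (p / 2) ≤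
      ENNReal.ofReal D * (a + b) ^ p + ENNReal.ofReal E * (a ^ p + b ^ p) := by
  have hp2 : p / 2 < 0 := by linarith
  rcases eq_or_ne a ⊤ with rfl | ha'
  · simp [ENNReal.top_mul hb, ENNReal.top_rpow_of_neg hp2]
  rcases eq_or_ne b ⊤ with rfl | hb'
  · simp [ENNReal.mul_top ha, ENNReal.top_rpow_of_neg hp2]
  have hP : 0 < a.toReal := ENNReal.toReal_pos ha ha'
  have hQ : 0 < b.toReal := ENNReal.toReal_pos hb hb'
  rw [← ENNReal.ofReal_toReal ha', ← ENNReal.ofReal_toReal hb', ← ENNReal.ofReal_mul hP.le,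
    ← ENNReal.ofReal_add hP.le hQ.le, ENNReal.ofReal_rpow_of_pos (_root_.mul_pos hP hQ),
    ENNReal.ofReal_rpow_of_pos (_root_.add_pos hP hQ), ENNReal.ofReal_rpow_of_pos hP,
    ENNReal.ofReal_rpow_of_pos hQ, ← ENNReal.ofReal_add (by positivity) (by positivity),
    ← ENNReal.ofReal_mul hT, ← ENNReal.ofReal_mul hD, ← ENNReal.ofReal_mul hE,
    ← ENNReal.ofReal_add (by positivity) (by positivity)]
  exact ENNReal.ofReal_le_ofReal (h _ _ hP hQ)

theorem exists_powCosh_mul_eq {p Γ : ℝ} (hp : p < 0) (hΓ₀ : 0 < Γ) (hΓ₁ : Γ ≤ 1) :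
    ∃ u₀, 0 ≤ u₀ ∧ 2 * cosh (p * u₀) * (Γ / 2) = 1 ∧
      (ENNReal.ofReal ((1 + √(1 - Γ ^ 2)) / 2) ^ (1 / p) +
        ENNReal.ofReal ((1 - √(1 - Γ ^ 2)) / 2) ^ (1 / p)) ^ p =
        ENNReal.ofReal (powCosh p u₀ * (Γ / 2)) := by
  set δ := √(1 - Γ ^ 2)
  have hδ : δ ^ 2 = 1 - Γ ^ 2 := sq_sqrt (by nlinarith)
  have hδ₁ : δ < 1 := by nlinarith [sqrt_nonneg (1 - Γ ^ 2)]
  have hδ₀ : 0 ≤ δ := sqrt_nonneg _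
  set α := (1 + δ) / 2 with hα_def
  set β := (1 - δ) / 2 with hβ_def
  have hβ : 0 < β := by linarith
  have hβα : β ≤ α := by linarith
  have hα : 0 < α := hβ.trans_le hβα
  have hinv : ∀ {x : ℝ}, 0 < x → (x ^ (1 / p)) ^ p = x := fun hx => by
    rw [← rpow_mul hx.le, one_div_mul_cancel hp.ne, rpow_one]
  set P₀ := β ^ (1 / p)
  set Q₀ := α ^ (1 / p)
  have hP₀ : 0 < P₀ := by positivity
  have hQ₀ : 0 < Q₀ := by positivity
  have hmean : (P₀ * Q₀) ^ (p / 2) = Γ / 2 := by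
    rw [← mul_rpow hβ.le hα.le, ← rpow_mul (by positivity), one_div_mul_eq_div,
      div_div_cancel_left' hp.ne, show β * α = (Γ / 2) ^ 2 by linear_combination -hδ / 4,
      inv_eq_one_div, ← sqrt_eq_rpow, sqrt_sq (by positivity)]
  refine ⟨(log P₀ - log Q₀) / 2, ?_, ?_, ?_⟩
  · have : Q₀ ≤ P₀ := rpow_le_rpow_of_nonpos hβ hβα (one_div_neg.2 hp).le
    have := log_le_log hQ₀ this
    linarith
  · rw [← hmean, ← rpow_add_rpow_eq_two_cosh_mul hP₀ hQ₀, hinv hα, hinv hβ]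
    ring
  · rw [← hmean, ← rpow_add_eq_powCosh_mul hP₀ hQ₀, ENNReal.ofReal_rpow_of_pos hα,
      ENNReal.ofReal_rpow_of_pos hβ, ← ENNReal.ofReal_add (by positivity) (by positivity),
      ENNReal.ofReal_rpow_of_pos (by positivity), add_comm]

theorem ofReal_powCosh_mul_lintegral_le {X : Type*} [MeasurableSpace X] {μ : Measure X}
    {p u₀ : ℝ} (hp : p < 0) (hu₀ : 0 ≤ u₀) {f g : X → ℝ≥0∞} (hf : Measurable f)
    (hg : Measurable g) (hf₀ : ∀ x, f x ≠ 0) (hg₀ : ∀ x, g x ≠ 0)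
    (hfin : ∫⁻ x, f x ^ p ∂μ + ∫⁻ x, g x ^ p ∂μ ≠ ∞)
    (hmean : ENNReal.ofReal (2 * cosh (p * u₀)) * ∫⁻ x, (f x * g x) ^ (p / 2) ∂μ =
      ∫⁻ x, f x ^ p ∂μ + ∫⁻ x, g x ^ p ∂μ) :
    ENNReal.ofReal (powCosh p u₀) * ∫⁻ x, (f x * g x) ^ (p / 2) ∂μ ≤
      ∫⁻ x, (f x + g x) ^ p ∂μ := by
  obtain ⟨E, hE, hsupp⟩ := exists_supporting_slope hp hu₀
  have hpt : ∀ x,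
      ENNReal.ofReal (powCosh p u₀ + E * (2 * cosh (p * u₀))) * (f x * g x) ^ (p / 2) ≤
        (f x + g x) ^ p + ENNReal.ofReal E * (f x ^ p + g x ^ p) := fun x => by
    have := ENNReal.ofReal_mul_rpow_half_le (T := powCosh p u₀ + E * (2 * cosh (p * u₀))) hp
      (by have := powCosh_pos p u₀; positivity) zero_le_one hE
      (fun P Q hP hQ => by rw [one_mul]; exact mul_rpow_half_le_of_forall_le hsupp hP hQ)
      (hf₀ x) (hg₀ x)
    rwa [ENNReal.ofReal_one, one_mul] at this
  have hint := lintegral_mono (μ := μ) hpt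
  rw [lintegral_const_mul _ (by fun_prop), lintegral_add_left (by fun_prop),
    lintegral_const_mul _ (by fun_prop), lintegral_add_left (by fun_prop),
    ENNReal.ofReal_add (powCosh_pos p u₀).le (by positivity), ENNReal.ofReal_mul hE,
    add_mul, mul_assoc, hmean] at hint
  exact ENNReal.le_of_add_le_add_right (ENNReal.mul_ne_top ENNReal.ofReal_ne_top hfin) hint

theorem statement2_general
    {X : Type*} [MeasurableSpace X] (μ : Measure X) (p : ℝ)
    (hp : p < 0)
    (f g : X → ℝ≥0∞) (hf : Measurable f) (hg : Measurable g)
    (hfpos : ∀ x, 0 < f x) (hgpos : ∀ x, 0 < g x)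
    (hfp : ∫⁻ x, f x ^ p ∂μ ≠ ∞) (hgp : ∫⁻ x, g x ^ p ∂μ ≠ ∞)
    (Γ : ℝ)
    (hΓ : Γ = 2 * (∫⁻ x, (f x * g x) ^ (p / 2) ∂μ).toReal /
        ((∫⁻ x, f x ^ p ∂μ).toReal + (∫⁻ x, g x ^ p ∂μ).toReal)) :
    (ENNReal.ofReal ((1 + Real.sqrt (1 - Γ ^ 2)) / 2) ^ (1 / p) +
        ENNReal.ofReal ((1 - Real.sqrt (1 - Γ ^ 2)) / 2) ^ (1 / p)) ^ p *
      (∫⁻ x, f x ^ p ∂μ + ∫⁻ x, g x ^ p ∂μ) ≤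
      ∫⁻ x, (f x + g x) ^ p ∂μ := by
  set A := ∫⁻ x, f x ^ p ∂μ
  set B := ∫⁻ x, g x ^ p ∂μ
  set C := ∫⁻ x, (f x * g x) ^ (p / 2) ∂μ
  have hf₀ : ∀ x, f x ≠ 0 := fun x => (hfpos x).ne'
  have hg₀ : ∀ x, g x ≠ 0 := fun x => (hgpos x).ne'
  have hAB : A + B ≠ ∞ := ENNReal.add_ne_top.2 ⟨hfp, hgp⟩
  have hmean_le : 2 * C ≤ A + B := by
    rw [← lintegral_const_mul _ (by fun_prop), ← lintegral_add_left (by fun_prop)]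
    refine lintegral_mono fun x => ?_
    simpa using ENNReal.ofReal_mul_rpow_half_le hp zero_le_two le_rfl zero_le_one
      (fun P Q hP hQ => by simpa using two_mul_rpow_half_le_rpow_add_rpow hP hQ) (hf₀ x) (hg₀ x)
  have hC : C ≠ ∞ :=
    ne_top_of_le_ne_top hAB ((le_add_self.trans_eq (two_mul C).symm).trans hmean_le)
  rcases eq_or_ne C 0 with hC0 | hC0
  · have hΓ0 : Γ = 0 := by simp [hΓ, hC0]
    simp [hΓ0, ENNReal.zero_rpow_of_neg (inv_lt_zero.2 hp), ENNReal.top_rpow_of_neg hp]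
  have hsum : (A + B).toReal = A.toReal + B.toReal := ENNReal.toReal_add hfp hgp
  have hCpos : 0 < C.toReal := ENNReal.toReal_pos hC0 hC
  have h2C : 2 * C.toReal ≤ A.toReal + B.toReal := by
    rw [← hsum]; simpa using ENNReal.toReal_mono hAB hmean_le
  have hABpos : 0 < A.toReal + B.toReal := by linarith
  have hΓ₀ : 0 < Γ := by rw [hΓ]; positivity
  have hΓ₁ : Γ ≤ 1 := by rw [hΓ, div_le_one hABpos]; exact h2C
  have hCΓ : C = ENNReal.ofReal (Γ / 2) * (A + B) := by
    rw [hΓ, ← ENNReal.ofReal_toReal hAB, ← ENNReal.ofReal_mul (by positivity), hsum,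
      show 2 * C.toReal / (A.toReal + B.toReal) / 2 * (A.toReal + B.toReal) = C.toReal by
        field_simp, ENNReal.ofReal_toReal hC]
  obtain ⟨u₀, hu₀, hcosh, hcoef⟩ := exists_powCosh_mul_eq hp hΓ₀ hΓ₁
  rw [hcoef, ENNReal.ofReal_mul (powCosh_pos p u₀).le, mul_assoc, ← hCΓ]
  refine ofReal_powCosh_mul_lintegral_le hp hu₀ hf hg hf₀ hg₀ hAB ?_
  change ENNReal.ofReal (2 * cosh (p * u₀)) * C = A + B
  rw [hCΓ, ← mul_assoc, ← ENNReal.ofReal_mul (by positivity), hcosh, ENNReal.ofReal_one,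
    one_mul]

/-- Theorem 1 (lower bound), for `p < 0`; the functions take values in `(0,∞]`, with the
convention `f^p = 0` where `f = ∞` (built into `ENNReal.rpow`).  The coefficient
`(((1+√(1-Γ²))/2)^{1/p} + ((1-√(1-Γ²))/2)^{1/p})^p` is computed in `ℝ≥0∞`, which realizes the
limiting convention `0^{1/p} = ∞` (for `1/p < 0`) and `∞^p = 0`. -/
theorem statement2
    {X : Type*} [MeasurableSpace X] (μ : Measure X) (p : ℝ)
    (hp : p < 0)
    (f g : X → ℝ≥0∞) (hf : Measurable f) (hg : Measurable g)
    (hfpos : ∀ x, 0 < f x) (hgpos : ∀ x, 0 < g x)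
    (hfp : ∫⁻ x, f x ^ p ∂μ ≠ ∞) (hgp : ∫⁻ x, g x ^ p ∂μ ≠ ∞)
    (hpos : 0 < ∫⁻ x, f x ^ p ∂μ + ∫⁻ x, g x ^ p ∂μ)
    (Γ : ℝ)
    (hΓ : Γ = 2 * (∫⁻ x, (f x * g x) ^ (p / 2) ∂μ).toReal /
        ((∫⁻ x, f x ^ p ∂μ).toReal + (∫⁻ x, g x ^ p ∂μ).toReal)) :
    (ENNReal.ofReal ((1 + Real.sqrt (1 - Γ ^ 2)) / 2) ^ (1 / p) +
        ENNReal.ofReal ((1 - Real.sqrt (1 - Γ ^ 2)) / 2) ^ (1 / p)) ^ p *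
      (∫⁻ x, f x ^ p ∂μ + ∫⁻ x, g x ^ p ∂μ) ≤
      ∫⁻ x, (f x + g x) ^ p ∂μ :=
  statement2_general μ p hp f g hf hg hfpos hgpos hfp hgp Γ hΓ
end

section
/- Let p ∈ (0,1] ∪ [2,∞). For any measure space (X, 𝒜, μ) and any measurable f, g : X → [0,∞) with ∫ f^p dμ < ∞ and ∫ g^p dμ < ∞, setting C := min{∫ f^p dμ, ∫ g^p dμ, ∫ (fg)^{p/2} dμ} / ∫ (fg)^{p/2} dμ if ∫ (fg)^{p/2} dμ > 0 and C := 1 otherwise, one has ∫ (f+g)^p dμ ≥ ∫ f^p dμ + ∫ g^p dμ + ( (C^{−1/p} + C^{1/p})^p − C^{−1} − C ) · ∫ (fg)^{p/2} dμ. -/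
/-!
Let `Φ(t) = (t^{-1/p} + t^{1/p})^p - t⁻¹ - t`. For `0 < a ≤ b` and `u = √(ab)` one has
`(a + b)^p - a^p - b^p = u^p Φ((a/u)^p)` with `(a/u)^p ∈ (0, 1]`. For `p ∈ (0,1] ∪ [2,∞)` the
function `Φ` is convex on `(0, 1]` (its second derivative is nonnegative by Bernoulli's
inequality) and `Φ'(1) = 0`, so `Φ' ≤ 0` there. The tangent line of `Φ` at `C` then gives
pointwise `(a + b)^p - a^p - b^p ≥ Φ(C) (ab)^{p/2} + Φ'(C) (min(a,b)^p - C (ab)^{p/2})`.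
Integrating, the last term has a nonnegative integral, because `min(f,g)^p` is dominated by
`f^p`, `g^p` and `(fg)^{p/2}`, whence `∫ min(f,g)^p ≤ C ∫ (fg)^{p/2}` by the choice of `C`.
-/

open MeasureTheory Real Set
open scoped ENNReal

lemma one_add_mul_self_le_rpow_one_add_of_nonpos {s α : ℝ} (hs : -1 < s) (hα₁ : -1 ≤ α)
    (hα₀ : α ≤ 0) : 1 + α * s ≤ (1 + s) ^ α := by
  rcases le_or_gt (1 + α * s) 0 with h | h
  · exact h.trans (rpow_nonneg (by linarith) _)
  have hs₁ : 0 < 1 + s := by linarith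
  -- `(1 + s) ^ α = 1 / (1 + s) ^ (-α) ≥ 1 / (1 - α s) ≥ 1 + α s`
  have hup : (1 + s) ^ (-α) ≤ 1 + -α * s :=
    rpow_one_add_le_one_add_mul_self hs.le (by linarith) (by linarith)
  rw [rpow_neg hs₁.le] at hup
  rw [← inv_le_inv₀ (rpow_pos_of_pos hs₁ α) h]
  refine hup.trans ?_
  rw [← one_div, le_div_iff₀ h]
  nlinarith [sq_nonneg (α * s)]

lemma ConvexOn.add_mul_sub_le_of_hasDerivAt {S : Set ℝ} {f : ℝ → ℝ} {x y f' : ℝ}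
    (hf : ConvexOn ℝ S f) (hx : x ∈ S) (hy : y ∈ S) (hd : HasDerivAt f f' x) :
    f x + f' * (y - x) ≤ f y := by
  rcases lt_trichotomy x y with hxy | rfl | hxy
  · have := hf.le_slope_of_hasDerivAt hx hy hxy hd
    rw [slope_def_field, le_div_iff₀ (sub_pos.2 hxy)] at this
    linarith
  · simp
  · have := hf.slope_le_of_hasDerivAt hy hx hxy hd
    rw [slope_def_field, div_le_iff₀ (sub_pos.2 hxy)] at this
    linarith

lemma ENNReal.mul_self_rpow_half {p : ℝ} (x : ℝ≥0∞) : (x * x) ^ (p / 2) = x ^ p := by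
  rw [← sq, ← ENNReal.rpow_two, ← ENNReal.rpow_mul]; ring_nf

lemma ENNReal.min_rpow_le_mul_rpow_half {p : ℝ} (hp : 0 ≤ p) (a b : ℝ≥0∞) :
    min a b ^ p ≤ (a * b) ^ (p / 2) := by
  rw [← ENNReal.mul_self_rpow_half]
  gcongr
  exacts [min_le_left _ _, min_le_right _ _]

noncomputable def phi (p t : ℝ) : ℝ := (t ^ (-(1 / p)) + t ^ (1 / p)) ^ p - t⁻¹ - t

noncomputable def phiDeriv (p t : ℝ) : ℝ :=
  ((1 + t ^ (2 / p)) ^ (p - 1) * (t ^ (2 / p) - 1) + 1) / t ^ 2 - 1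

noncomputable def phiDeriv2 (p t : ℝ) : ℝ :=
  2 * ((1 + t ^ (2 / p)) ^ (p - 2) * (1 + (2 / p - 1) * t ^ (2 / p)) - 1) / t ^ 3

section Phi

variable {p t : ℝ}

lemma pos_of_mem_Ioc_union_Ici (hp : p ∈ Ioc 0 1 ∪ Ici 2) : 0 < p := by
  rcases hp with h | h
  exacts [h.1, zero_lt_two.trans_le h]

lemma hasDerivAt_phi (hp : 0 < p) (ht : 0 < t) : HasDerivAt (phi p) (phiDeriv p t) t := by
  have hsum : 0 < t ^ (-(1 / p)) + t ^ (1 / p) := by positivity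
  have h := ((((hasDerivAt_rpow_const (p := -(1 / p)) (Or.inl ht.ne')).add
    (hasDerivAt_rpow_const (p := 1 / p) (Or.inl ht.ne'))).rpow_const (p := p)
    (Or.inl hsum.ne')).sub (hasDerivAt_inv ht.ne')).sub (hasDerivAt_id t)
  refine h.congr_deriv ?_
  -- Everything is a power of `a = t ^ (1 / p)`, with `a ^ p = t`.
  set a := t ^ (1 / p) with ha_def
  have ha : 0 < a := by positivity
  have hneg : t ^ (-(1 / p)) = a⁻¹ := rpow_neg ht.le _
  have hap : a ^ p = t := by
    rw [ha_def, ← rpow_mul ht.le, one_div_mul_cancel hp.ne', rpow_one]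
  have h1 : t ^ (-(1 / p) - 1) = a⁻¹ * t⁻¹ := by
    rw [rpow_sub ht, rpow_one, hneg, div_eq_mul_inv]
  have h2 : t ^ (1 / p - 1) = a * t⁻¹ := by rw [rpow_sub ht, rpow_one, div_eq_mul_inv]
  have h3 : t ^ (2 / p) = a * a := by
    rw [ha_def, ← rpow_add ht]; congr 1; ring
  have h4 : (a⁻¹ + a) ^ (p - 1) = (1 + a * a) ^ (p - 1) * a / t := by
    rw [show a⁻¹ + a = (1 + a * a) / a by field_simp, div_rpow (by positivity) ha.le,
      rpow_sub ha, rpow_one, hap]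
    field_simp
  simp only [phiDeriv, Pi.add_apply]
  rw [h1, h2, h3, hneg, h4]
  field_simp
  ring

lemma hasDerivAt_phiDeriv (hp : 0 < p) (ht : 0 < t) :
    HasDerivAt (phiDeriv p) (phiDeriv2 p t) t := by
  have hr := hasDerivAt_rpow_const (x := t) (p := 2 / p) (Or.inl ht.ne')
  have hsum : 0 < 1 + t ^ (2 / p) := by positivity
  have h := (((((hr.const_add 1).rpow_const (p := p - 1) (Or.inl hsum.ne')).mul
    (hr.sub_const 1)).add_const 1).div (hasDerivAt_pow 2 t) (by positivity)).sub_const 1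
  refine h.congr_deriv ?_
  set r := t ^ (2 / p) with hr_def
  have h1 : t ^ (2 / p - 1) = r * t⁻¹ := by rw [rpow_sub ht, rpow_one, div_eq_mul_inv]
  have h2 : (1 + r) ^ (p - 1) = (1 + r) ^ (p - 2) * (1 + r) := by
    rw [← rpow_add_one hsum.ne']; ring_nf
  simp only [phiDeriv2, Pi.mul_apply]
  rw [h1, h2, show p - 1 - 1 = p - 2 by ring]
  field_simp
  ring

lemma phiDeriv2_nonneg (hp : p ∈ Ioc 0 1 ∪ Ici 2) (ht₀ : 0 < t) (ht₁ : t ≤ 1) :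
    0 ≤ phiDeriv2 p t := by
  have hp₀ := pos_of_mem_Ioc_union_Ici hp
  set r := t ^ (2 / p)
  have hr₀ : 0 < r := by positivity
  have hr₁ : r ≤ 1 := rpow_le_one ht₀.le ht₁ (by positivity)
  have hbern : 1 + (p - 1) * r ≤ (1 + r) ^ (p - 1) := by
    rcases hp with h | h
    · exact one_add_mul_self_le_rpow_one_add_of_nonpos (by linarith) (by linarith [h.1])
        (by linarith [h.2])
    · exact one_add_mul_self_le_rpow_one_add (by linarith) (by linarith [mem_Ici.1 h])
  have hpp : 0 ≤ (p - 1) * (p - 2) := by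
    rcases hp with h | h
    · nlinarith [h.1, h.2]
    · nlinarith [mem_Ici.1 h]
  have hq : 0 ≤ 1 + (2 / p - 1) * r := by
    have : 0 ≤ 2 / p * r := by positivity
    nlinarith
  have hprod : 1 + r ≤ (1 + (p - 1) * r) * (1 + (2 / p - 1) * r) := by
    have h := mul_nonneg hpp (mul_nonneg hr₀.le (sub_nonneg.2 hr₁))
    have e : p * ((1 + (p - 1) * r) * (1 + (2 / p - 1) * r) - (1 + r)) =
        (p - 1) * (p - 2) * (r * (1 - r)) := by field_simp; ring
    nlinarith
  have hsplit : (1 + r) ^ (p - 1) = (1 + r) * (1 + r) ^ (p - 2) := by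
    rw [mul_comm, ← rpow_add_one (by positivity)]; ring_nf
  have key : 1 ≤ (1 + r) ^ (p - 2) * (1 + (2 / p - 1) * r) := by
    refine le_of_mul_le_mul_left ?_ (by positivity : (0 : ℝ) < 1 + r)
    calc (1 + r) * 1 ≤ (1 + (p - 1) * r) * (1 + (2 / p - 1) * r) := by linarith
      _ ≤ (1 + r) ^ (p - 1) * (1 + (2 / p - 1) * r) := by gcongr
      _ = _ := by rw [hsplit]; ring
  unfold phiDeriv2
  have := sub_nonneg.2 key
  positivity

lemma convexOn_phi (hp : p ∈ Ioc 0 1 ∪ Ici 2) : ConvexOn ℝ (Ioc 0 1) (phi p) := by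
  have hp₀ := pos_of_mem_Ioc_union_Ici hp
  refine convexOn_of_hasDerivWithinAt2_nonneg (convex_Ioc 0 1)
    (fun t ht ↦ (hasDerivAt_phi hp₀ ht.1).continuousAt.continuousWithinAt)
    (fun t ht ↦ (hasDerivAt_phi hp₀ ?_).hasDerivWithinAt)
    (fun t ht ↦ (hasDerivAt_phiDeriv hp₀ ?_).hasDerivWithinAt) fun t ht ↦ ?_ <;>
  rw [interior_Ioc] at ht
  exacts [ht.1, ht.1, phiDeriv2_nonneg hp ht.1 ht.2.le]

lemma phiDeriv_one : phiDeriv p 1 = 0 := by simp [phiDeriv]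

lemma phiDeriv_nonpos (hp : p ∈ Ioc 0 1 ∪ Ici 2) (ht : t ∈ Ioc 0 1) : phiDeriv p t ≤ 0 := by
  have hp₀ := pos_of_mem_Ioc_union_Ici hp
  have h := (convexOn_phi hp).monotoneOn_deriv
    (fun x hx ↦ (hasDerivAt_phi hp₀ hx.1).differentiableAt) ht ⟨one_pos, le_rfl⟩ ht.2
  rwa [(hasDerivAt_phi hp₀ ht.1).deriv, (hasDerivAt_phi hp₀ one_pos).deriv, phiDeriv_one] at h

lemma phi_rpow (hp : p ≠ 0) {x : ℝ} (hx : 0 < x) :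
    phi p (x ^ p) = (x⁻¹ + x) ^ p - x⁻¹ ^ p - x ^ p := by
  have h : (x ^ p) ^ (1 / p) = x := by rw [← rpow_mul hx.le, mul_one_div_cancel hp, rpow_one]
  rw [phi, rpow_neg (by positivity), h, inv_rpow hx.le]

lemma mul_rpow_half_eq_sqrt_rpow {a b : ℝ} (ha : 0 ≤ a) (hb : 0 ≤ b) :
    (a * b) ^ (p / 2) = √(a * b) ^ p := by
  rw [sqrt_eq_rpow, ← rpow_mul (by positivity)]; ring_nf

lemma phi_mul_sqrt_rpow {a b : ℝ} (hp : p ≠ 0) (ha : 0 < a) (hb : 0 < b) :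
    phi p ((a / √(a * b)) ^ p) * √(a * b) ^ p = (a + b) ^ p - a ^ p - b ^ p := by
  set u := √(a * b)
  have hu : 0 < u := by positivity
  have hu2 : u * u = a * b := mul_self_sqrt (by positivity)
  rw [phi_rpow hp (by positivity), sub_mul, sub_mul, ← mul_rpow (by positivity) hu.le,
    ← mul_rpow (by positivity) hu.le, ← mul_rpow (by positivity) hu.le]
  have e1 : ((a / u)⁻¹ + a / u) * u = a + b := by field_simp; linear_combination hu2
  have e2 : (a / u)⁻¹ * u = b := by field_simp; linear_combination hu2
  have e3 : a / u * u = a := by field_simp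
  rw [e1, e2, e3]; ring

lemma add_rpow_lower_bound_of_le (hp : p ∈ Ioc 0 1 ∪ Ici 2) {c a b : ℝ} (hc : c ∈ Ioc 0 1)
    (ha : 0 < a) (hab : a ≤ b) :
    a ^ p + b ^ p + phi p c * (a * b) ^ (p / 2) +
      phiDeriv p c * (a ^ p - c * (a * b) ^ (p / 2)) ≤ (a + b) ^ p := by
  have hp₀ := pos_of_mem_Ioc_union_Ici hp
  have hb : 0 < b := ha.trans_le hab
  rw [mul_rpow_half_eq_sqrt_rpow ha.le hb.le]
  set u := √(a * b)
  have hu : 0 < u := by positivity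
  have hau : a ≤ u := le_sqrt_of_sq_le (by nlinarith)
  have hs : (a / u) ^ p ∈ Ioc 0 1 :=
    ⟨by positivity, rpow_le_one (by positivity) ((div_le_one hu).2 hau) hp₀.le⟩
  have tangent := mul_le_mul_of_nonneg_right
    ((convexOn_phi hp).add_mul_sub_le_of_hasDerivAt hc hs (hasDerivAt_phi hp₀ hc.1))
    (by positivity : 0 ≤ u ^ p)
  rw [phi_mul_sqrt_rpow hp₀.ne' ha hb, div_rpow ha.le hu.le] at tangent
  rw [add_mul, mul_assoc, sub_mul, div_mul_cancel₀ _ (by positivity)] at tangent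
  linarith

lemma add_rpow_lower_bound (hp : p ∈ Ioc 0 1 ∪ Ici 2) {c a b : ℝ} (hc : c ∈ Ioc 0 1)
    (ha : 0 ≤ a) (hb : 0 ≤ b) :
    a ^ p + b ^ p + phi p c * (a * b) ^ (p / 2) +
      phiDeriv p c * (min a b ^ p - c * (a * b) ^ (p / 2)) ≤ (a + b) ^ p := by
  have hp₀ := pos_of_mem_Ioc_union_Ici hp
  rcases ha.eq_or_lt with rfl | ha
  · simp [zero_rpow hp₀.ne', zero_rpow (half_pos hp₀).ne', hb]
  rcases hb.eq_or_lt with rfl | hb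
  · simp [zero_rpow hp₀.ne', zero_rpow (half_pos hp₀).ne', ha.le]
  rcases le_total a b with h | h
  · rw [min_eq_left h]
    exact add_rpow_lower_bound_of_le hp hc ha h
  · rw [min_eq_right h, mul_comm a b, add_comm a b, add_comm (a ^ p)]
    exact add_rpow_lower_bound_of_le hp hc hb h

end Phi

-- `minRatio ‖f‖_p^p ‖g‖_p^p ‖fg‖_{p/2}^{p/2}` is the constant `C_p`.
noncomputable def minRatio (A B I : ℝ≥0∞) : ℝ :=
  if 0 < I then min (min A.toReal B.toReal) I.toReal / I.toReal else 1

lemma minRatio_mem_Ioc {A B I : ℝ≥0∞} (hA : A ≠ ∞) (hB : B ≠ ∞)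
    (hI : I ≤ A ^ (1 / 2 : ℝ) * B ^ (1 / 2 : ℝ)) : minRatio A B I ∈ Ioc 0 1 := by
  unfold minRatio
  split_ifs with h
  · have hA₀ : A ≠ 0 := by rintro rfl; simp at hI; simp [hI] at h
    have hB₀ : B ≠ 0 := by rintro rfl; simp at hI; simp [hI] at h
    have hI₀ : 0 < I.toReal := ENNReal.toReal_pos h.ne' (ne_top_of_le_ne_top (by finiteness) hI)
    exact ⟨div_pos (lt_min (lt_min (ENNReal.toReal_pos hA₀ hA) (ENNReal.toReal_pos hB₀ hB)) hI₀)
      hI₀, div_le_one_of_le₀ (min_le_right _ _) hI₀.le⟩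
  · exact ⟨one_pos, le_rfl⟩

lemma toReal_le_minRatio_mul {M A B I : ℝ≥0∞} (hA : A ≠ ∞) (hB : B ≠ ∞) (hI : I ≠ ∞)
    (hMA : M ≤ A) (hMB : M ≤ B) (hMI : M ≤ I) : M.toReal ≤ minRatio A B I * I.toReal := by
  unfold minRatio
  split_ifs with h
  · rw [div_mul_cancel₀ _ (ENNReal.toReal_pos h.ne' hI).ne']
    exact le_min (le_min (ENNReal.toReal_mono hA hMA) (ENNReal.toReal_mono hB hMB))
      (ENNReal.toReal_mono hI hMI)
  · exact (one_mul I.toReal).symm ▸ ENNReal.toReal_mono hI hMI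

section Integral

variable {X : Type*} [MeasurableSpace X] {μ : Measure X} {p : ℝ}

lemma integral_add_rpow_lower_bound (hp : p ∈ Ioc 0 1 ∪ Ici 2) {F G : X → ℝ} (hF : 0 ≤ F)
    (hG : 0 ≤ G) (hFp : Integrable (fun x ↦ F x ^ p) μ) (hGp : Integrable (fun x ↦ G x ^ p) μ)
    (hI : Integrable (fun x ↦ (F x * G x) ^ (p / 2)) μ)
    (hM : Integrable (fun x ↦ min (F x) (G x) ^ p) μ)
    (hS : Integrable (fun x ↦ (F x + G x) ^ p) μ) {c : ℝ} (hc : c ∈ Ioc 0 1)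
    (hmin : ∫ x, min (F x) (G x) ^ p ∂μ ≤ c * ∫ x, (F x * G x) ^ (p / 2) ∂μ) :
    ∫ x, F x ^ p ∂μ + ∫ x, G x ^ p ∂μ + phi p c * ∫ x, (F x * G x) ^ (p / 2) ∂μ ≤
      ∫ x, (F x + G x) ^ p ∂μ := by
  have hcorr : 0 ≤ phiDeriv p c * (∫ x, min (F x) (G x) ^ p ∂μ -
      c * ∫ x, (F x * G x) ^ (p / 2) ∂μ) :=
    mul_nonneg_of_nonpos_of_nonpos (phiDeriv_nonpos hp hc) (by linarith)
  calc _ ≤ ∫ x, F x ^ p ∂μ + ∫ x, G x ^ p ∂μ + phi p c * ∫ x, (F x * G x) ^ (p / 2) ∂μ +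
        phiDeriv p c * (∫ x, min (F x) (G x) ^ p ∂μ - c * ∫ x, (F x * G x) ^ (p / 2) ∂μ) := by
        linarith
    _ = ∫ x, F x ^ p + G x ^ p + phi p c * (F x * G x) ^ (p / 2) +
        phiDeriv p c * (min (F x) (G x) ^ p - c * (F x * G x) ^ (p / 2)) ∂μ := by
        rw [integral_add (by fun_prop) (by fun_prop), integral_add (by fun_prop) (by fun_prop),
          integral_add hFp hGp, integral_const_mul, integral_const_mul,
          integral_sub hM (by fun_prop), integral_const_mul]
    _ ≤ _ := integral_mono (by fun_prop) hS fun x ↦ add_rpow_lower_bound hp hc (hF x) (hG x)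

variable {f g : X → ℝ≥0∞}

lemma lintegral_mul_rpow_half_le (hp : 0 ≤ p) (hf : AEMeasurable f μ) (hg : AEMeasurable g μ) :
    ∫⁻ x, (f x * g x) ^ (p / 2) ∂μ ≤
      (∫⁻ x, f x ^ p ∂μ) ^ (1 / 2 : ℝ) * (∫⁻ x, g x ^ p ∂μ) ^ (1 / 2 : ℝ) := by
  have h := ENNReal.lintegral_mul_le_Lp_mul_Lq μ Real.HolderConjugate.two_two
    (hf.pow_const (p / 2)) (hg.pow_const (p / 2))
  simp only [Pi.mul_apply, ← ENNReal.rpow_mul, div_mul_cancel₀ p two_ne_zero] at h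
  simpa only [ENNReal.mul_rpow_of_nonneg _ _ (by positivity : 0 ≤ p / 2)]

lemma lintegral_add_rpow_ne_top (hp : 0 ≤ p) (hf : AEMeasurable f μ) (hfp : ∫⁻ x, f x ^ p ∂μ ≠ ∞)
    (hgp : ∫⁻ x, g x ^ p ∂μ ≠ ∞) : ∫⁻ x, (f x + g x) ^ p ∂μ ≠ ∞ := by
  refine ne_top_of_le_ne_top ?_ (lintegral_mono fun x ↦
    ENNReal.add_rpow_le_two_rpow_mul_rpow_add_rpow (f x) (g x) hp)
  rw [lintegral_const_mul' _ _ (by finiteness), lintegral_add_left' (hf.pow_const p)]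
  finiteness

lemma lintegral_mul_rpow_half_ne_top (hp : 0 ≤ p) (hf : AEMeasurable f μ) (hg : AEMeasurable g μ)
    (hfp : ∫⁻ x, f x ^ p ∂μ ≠ ∞) (hgp : ∫⁻ x, g x ^ p ∂μ ≠ ∞) :
    ∫⁻ x, (f x * g x) ^ (p / 2) ∂μ ≠ ∞ :=
  ne_top_of_le_ne_top (by finiteness) (lintegral_mul_rpow_half_le hp hf hg)

lemma toReal_lintegral_add_rpow_lower_bound (hp : p ∈ Ioc 0 1 ∪ Ici 2) (hf : Measurable f)
    (hg : Measurable g) (hffin : ∀ x, f x ≠ ∞) (hgfin : ∀ x, g x ≠ ∞)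
    (hfp : ∫⁻ x, f x ^ p ∂μ ≠ ∞) (hgp : ∫⁻ x, g x ^ p ∂μ ≠ ∞) {c : ℝ} (hc : c ∈ Ioc 0 1)
    (hmin : (∫⁻ x, min (f x) (g x) ^ p ∂μ).toReal ≤ c * (∫⁻ x, (f x * g x) ^ (p / 2) ∂μ).toReal) :
    (∫⁻ x, f x ^ p ∂μ).toReal + (∫⁻ x, g x ^ p ∂μ).toReal +
        phi p c * (∫⁻ x, (f x * g x) ^ (p / 2) ∂μ).toReal ≤
      (∫⁻ x, (f x + g x) ^ p ∂μ).toReal := by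
  have hp₀ := pos_of_mem_Ioc_union_Ici hp
  have hMfin : ∫⁻ x, min (f x) (g x) ^ p ∂μ ≠ ∞ :=
    ne_top_of_le_ne_top hfp (lintegral_mono fun x ↦ ENNReal.rpow_le_rpow (min_le_left _ _) hp₀.le)
  have conv : ∀ h : X → ℝ≥0∞, Measurable h → ∫⁻ x, h x ∂μ ≠ ∞ →
      Integrable (fun x ↦ (h x).toReal) μ ∧ (∫⁻ x, h x ∂μ).toReal = ∫ x, (h x).toReal ∂μ :=
    fun h hm hfin ↦ ⟨integrable_toReal_of_lintegral_ne_top hm.aemeasurable hfin,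
      (integral_toReal hm.aemeasurable (ae_lt_top hm hfin)).symm⟩
  obtain ⟨iA, eA⟩ := conv _ (by fun_prop) hfp
  obtain ⟨iB, eB⟩ := conv _ (by fun_prop) hgp
  obtain ⟨iI, eI⟩ := conv _ (by fun_prop)
    (lintegral_mul_rpow_half_ne_top hp₀.le hf.aemeasurable hg.aemeasurable hfp hgp)
  obtain ⟨iM, eM⟩ := conv _ (by fun_prop) hMfin
  obtain ⟨iS, eS⟩ := conv _ (by fun_prop)
    (lintegral_add_rpow_ne_top hp₀.le hf.aemeasurable hfp hgp)
  simp only [← ENNReal.toReal_rpow, ENNReal.toReal_mul, ENNReal.toReal_add (hffin _) (hgfin _),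
    ENNReal.toReal_min (hffin _) (hgfin _)] at iA eA iB eB iI eI iM eM iS eS
  rw [eM, eI] at hmin
  rw [eA, eB, eI, eS]
  exact integral_add_rpow_lower_bound hp (fun _ ↦ ENNReal.toReal_nonneg)
    (fun _ ↦ ENNReal.toReal_nonneg) iA iB iI iM iS hc hmin

end Integral

/-- Theorem 2 (lower bound), for `p ∈ (0,1] ∪ [2,∞)`:
`‖f+g‖_p^p ≥ ‖f‖_p^p + ‖g‖_p^p + ((C^{-1/p} + C^{1/p})^p - C⁻¹ - C) ‖fg‖_{p/2}^{p/2}`.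
Since the coefficient may be negative (for `p ∈ (0,1]`), the inequality is stated for the
real values of the (automatically finite) integrals. -/
theorem statement5
    {X : Type*} [MeasurableSpace X] (μ : Measure X) (p : ℝ)
    (hp : p ∈ Set.Ioc (0 : ℝ) 1 ∪ Set.Ici (2 : ℝ))
    (f g : X → ℝ≥0∞) (hf : Measurable f) (hg : Measurable g)
    (hffin : ∀ x, f x ≠ ∞) (hgfin : ∀ x, g x ≠ ∞)
    (hfp : ∫⁻ x, f x ^ p ∂μ ≠ ∞) (hgp : ∫⁻ x, g x ^ p ∂μ ≠ ∞)
    (C : ℝ)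
    (hC : C = if 0 < ∫⁻ x, (f x * g x) ^ (p / 2) ∂μ then
        min (min (∫⁻ x, f x ^ p ∂μ).toReal (∫⁻ x, g x ^ p ∂μ).toReal)
            (∫⁻ x, (f x * g x) ^ (p / 2) ∂μ).toReal /
          (∫⁻ x, (f x * g x) ^ (p / 2) ∂μ).toReal
      else 1) :
    (∫⁻ x, f x ^ p ∂μ).toReal + (∫⁻ x, g x ^ p ∂μ).toReal +
        ((C ^ (-(1 / p)) + C ^ (1 / p)) ^ p - C⁻¹ - C) *
          (∫⁻ x, (f x * g x) ^ (p / 2) ∂μ).toReal ≤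
      (∫⁻ x, (f x + g x) ^ p ∂μ).toReal := by
  have hp₀ := pos_of_mem_Ioc_union_Ici hp
  have hC : C = minRatio (∫⁻ x, f x ^ p ∂μ) (∫⁻ x, g x ^ p ∂μ)
      (∫⁻ x, (f x * g x) ^ (p / 2) ∂μ) := hC
  have hmin : ∀ x, min (f x) (g x) ^ p ≤ f x ^ p ∧ min (f x) (g x) ^ p ≤ g x ^ p :=
    fun x ↦ ⟨ENNReal.rpow_le_rpow (min_le_left _ _) hp₀.le,
      ENNReal.rpow_le_rpow (min_le_right _ _) hp₀.le⟩
  refine toReal_lintegral_add_rpow_lower_bound hp hf hg hffin hgfin hfp hgp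
    (hC ▸ minRatio_mem_Ioc hfp hgp
      (lintegral_mul_rpow_half_le hp₀.le hf.aemeasurable hg.aemeasurable))
    (hC ▸ toReal_le_minRatio_mul hfp hgp
      (lintegral_mul_rpow_half_ne_top hp₀.le hf.aemeasurable hg.aemeasurable hfp hgp)
      (lintegral_mono fun x ↦ (hmin x).1) (lintegral_mono fun x ↦ (hmin x).2)
      (lintegral_mono fun x ↦ ENNReal.min_rpow_le_mul_rpow_half hp₀.le _ _))
end

section
/- Let p ∈ [1,2], let (X, 𝒜, μ) be a measure space and let (f_j)_{j≥1} be a sequence of measurable functions f_j : X → [0,∞). If ∑_j ∫ f_j^p dμ < ∞ and ∑_{i<j} ∫ (f_i f_j)^{p/2} dμ < ∞, then the function ∑_j f_j belongs to L^p(μ), i.e. ∫ (∑_j f_j)^p dμ < ∞. -/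
/-!
Write `s = ∑ⱼ fⱼ` and `q = p / 2 ∈ (0, 1]`. Since `t ↦ t ^ q` is subadditive,
`s ^ p = (s ^ q) ^ 2 ≤ (∑ⱼ fⱼ ^ q) ^ 2 = ∑ᵢ ∑ⱼ (fᵢ fⱼ) ^ q` pointwise. Integrating, the double sum
splits by symmetry into the diagonal `∑ⱼ ∫ fⱼ ^ p` plus twice the off-diagonal sum over `i < j`,
both finite by assumption.
-/

open MeasureTheory Real Set
open scoped ENNReal

namespace ENNReal

variable {ι κ : Type*}

theorem rpow_tsum_le_tsum_rpow {q : ℝ} (hq0 : 0 < q) (hq1 : q ≤ 1) (a : ι → ℝ≥0∞) :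
    (∑' i, a i) ^ q ≤ ∑' i, a i ^ q := by
  refine le_of_tendsto' ((continuous_rpow_const.tendsto _).comp ENNReal.summable.hasSum)
    fun s => ?_
  exact (Finset.le_sum_of_subadditive (· ^ q) (zero_rpow_of_pos hq0).le
    (fun a b => rpow_add_le_add_rpow a b hq0.le hq1) s a).trans (ENNReal.sum_le_tsum s)

theorem tsum_mul_tsum (a : ι → ℝ≥0∞) (b : κ → ℝ≥0∞) :
    (∑' i, a i) * (∑' j, b j) = ∑' i, ∑' j, a i * b j := by
  rw [← ENNReal.tsum_mul_right]
  exact tsum_congr fun i => ENNReal.tsum_mul_left.symm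

theorem mul_self_rpow_half_s13 (a : ℝ≥0∞) (p : ℝ) : (a * a) ^ (p / 2) = a ^ p := by
  rw [← sq, ← rpow_two, ← rpow_mul, mul_div_cancel₀ p two_ne_zero]

theorem rpow_tsum_le_tsum_tsum_mul_rpow {p : ℝ} (hp0 : 0 < p) (hp2 : p ≤ 2) (a : ι → ℝ≥0∞) :
    (∑' i, a i) ^ p ≤ ∑' i, ∑' j, (a i * a j) ^ (p / 2) := by
  have hsub := rpow_tsum_le_tsum_rpow (half_pos hp0) (by linarith) a
  calc (∑' i, a i) ^ p = (∑' i, a i) ^ (p / 2) * (∑' i, a i) ^ (p / 2) := by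
        rw [← rpow_add_of_nonneg _ _ (half_pos hp0).le (half_pos hp0).le, add_halves]
    _ ≤ (∑' i, a i ^ (p / 2)) * (∑' j, a j ^ (p / 2)) := mul_le_mul' hsub hsub
    _ = ∑' i, ∑' j, (a i * a j) ^ (p / 2) := by
        simp_rw [tsum_mul_tsum, mul_rpow_of_nonneg _ _ (half_pos hp0).le]

theorem tsum_tsum_eq_tsum_add_two_mul_of_symm {α : Type*} [LinearOrder α] {T : α → α → ℝ≥0∞}
    (hT : ∀ i j, T i j = T j i) :
    ∑' i, ∑' j, T i j = ∑' i, T i i + 2 * ∑' i, ∑' j, if i < j then T i j else 0 := by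
  have hsplit : ∀ i j, T i j =
      ((if i = j then T i j else 0) + if i < j then T i j else 0) + if j < i then T i j else 0 := by
    intro i j
    rcases lt_trichotomy i j with h | rfl | h
    · simp [h, h.ne, h.not_gt]
    · simp
    · simp [h, h.ne', h.not_gt]
  have hdiag : ∀ i, ∑' j, (if i = j then T i j else 0) = T i i := fun i => by
    simp_rw [eq_comm (a := i)]
    exact tsum_ite_eq i (T i)
  have hlower : ∑' i, ∑' j, (if j < i then T i j else 0)
      = ∑' i, ∑' j, if i < j then T i j else 0 := by
    rw [ENNReal.tsum_comm]
    simp_rw [hT]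
  calc ∑' i, ∑' j, T i j
      = ∑' i, ∑' j, (((if i = j then T i j else 0) + if i < j then T i j else 0)
          + if j < i then T i j else 0) := tsum_congr fun i => tsum_congr (hsplit i)
    _ = _ := by simp_rw [ENNReal.tsum_add, hdiag, hlower, two_mul, add_assoc]

end ENNReal

theorem MeasureTheory.lintegral_rpow_tsum_le {X ι : Type*} [MeasurableSpace X] [Countable ι]
    {μ : Measure X} {p : ℝ} (hp0 : 0 < p) (hp2 : p ≤ 2) {f : ι → X → ℝ≥0∞}
    (hf : ∀ i, AEMeasurable (f i) μ) :
    ∫⁻ x, (∑' i, f i x) ^ p ∂μ ≤ ∑' i, ∑' j, ∫⁻ x, (f i x * f j x) ^ (p / 2) ∂μ := by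
  have hmeas : ∀ i j, AEMeasurable (fun x => (f i x * f j x) ^ (p / 2)) μ := fun i j =>
    ((hf i).mul (hf j)).pow_const _
  calc ∫⁻ x, (∑' i, f i x) ^ p ∂μ
      ≤ ∫⁻ x, ∑' i, ∑' j, (f i x * f j x) ^ (p / 2) ∂μ :=
        lintegral_mono fun x => ENNReal.rpow_tsum_le_tsum_tsum_mul_rpow hp0 hp2 _
    _ = ∑' i, ∑' j, ∫⁻ x, (f i x * f j x) ^ (p / 2) ∂μ := by
        rw [lintegral_tsum fun i => AEMeasurable.tsum (hmeas i)]
        exact tsum_congr fun i => lintegral_tsum (hmeas i)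

theorem statement13_general
    {X : Type*} [MeasurableSpace X] (μ : Measure X) (p : ℝ)
    (hp : p ∈ Set.Icc (1 : ℝ) 2)
    (f : ℕ → X → ℝ≥0∞) (hf : ∀ j, Measurable (f j))
    (h1 : (∑' j, ∫⁻ x, f j x ^ p ∂μ) ≠ ∞)
    (h2 : (∑' (i : ℕ) (j : ℕ),
        if i < j then ∫⁻ x, (f i x * f j x) ^ (p / 2) ∂μ else 0) ≠ ∞) :
    ∫⁻ x, (∑' j, f j x) ^ p ∂μ < ∞ := by
  set T : ℕ → ℕ → ℝ≥0∞ := fun i j => ∫⁻ x, (f i x * f j x) ^ (p / 2) ∂μ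
  have hT : ∀ i j, T i j = T j i := fun i j => by simp only [T, mul_comm]
  have hdiag : ∀ i, T i i = ∫⁻ x, f i x ^ p ∂μ := fun i => by
    simp only [T, ENNReal.mul_self_rpow_half_s13]
  calc ∫⁻ x, (∑' j, f j x) ^ p ∂μ
      ≤ ∑' i, ∑' j, T i j :=
        lintegral_rpow_tsum_le (by linarith [hp.1]) hp.2 fun j => (hf j).aemeasurable
    _ = ∑' i, T i i + 2 * ∑' i, ∑' j, if i < j then T i j else 0 :=
        ENNReal.tsum_tsum_eq_tsum_add_two_mul_of_symm hT
    _ < ∞ := by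
        simp_rw [hdiag]
        exact ENNReal.add_lt_top.2 ⟨h1.lt_top, ENNReal.mul_lt_top (by simp) h2.lt_top⟩

/-- For `p ∈ [1,2]`: if `∑_j ‖f_j‖_p^p < ∞` and `∑_{i<j} ‖f_i f_j‖_{p/2}^{p/2} < ∞`,
then `∑_j f_j ∈ L^p`, i.e. `∫ (∑_j f_j)^p dμ < ∞`. -/
theorem statement13
    {X : Type*} [MeasurableSpace X] (μ : Measure X) (p : ℝ)
    (hp : p ∈ Set.Icc (1 : ℝ) 2)
    (f : ℕ → X → ℝ≥0∞) (hf : ∀ j, Measurable (f j)) (hffin : ∀ j x, f j x ≠ ∞)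
    (h1 : (∑' j, ∫⁻ x, f j x ^ p ∂μ) ≠ ∞)
    (h2 : (∑' (i : ℕ) (j : ℕ),
        if i < j then ∫⁻ x, (f i x * f j x) ^ (p / 2) ∂μ else 0) ≠ ∞) :
    ∫⁻ x, (∑' j, f j x) ^ p ∂μ < ∞ :=
  statement13_general μ p hp f hf h1 h2
end
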